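/- Let m ≥ 1, let μ and ν be probability measures on ℝ^m, let W > 0 and ε > 0. Suppose there exists a coupling γ of μ and ν such that ‖x − y‖₁ ≤ W for γ-almost every (x, y) ∈ ℝ^m × ℝ^m (i.e., the ∞-Wasserstein distance between μ and ν with respect to the L¹ norm is at most W). Then for every measurable set S ⊆ ℝ^m, (μ ∗ Lapₘ(W/ε))(S) ≤ e^ε · (ν ∗ Lapₘ(W/ε))(S); that is, the max-divergence between μ ∗ Lapₘ(W/ε) and ν ∗ Lapₘ(W/ε) is at most ε. -/

import Mathlib

/-!
Let `f` be the Laplace density of scale `b = W / ε`. By the triangle inequality,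
`f (u - x) ≤ exp (‖x - y‖₁ / b) * f (u - y) ≤ exp ε * f (u - y)` for all `u` once
`‖x - y‖₁ ≤ W`. Integrating over `u ∈ S`, the mass `g x = ∫_S f (u - x) du` that noise started
at `x` puts on `S` satisfies `g x ≤ exp ε * g y` for `γ`-a.e. `(x, y)`, and integrating along
the coupling `γ` compares `(μ ∗ Lap) S = ∫ g dμ` with `(ν ∗ Lap) S = ∫ g dν`.
-/

open MeasureTheory ProbabilityTheory

/-- The Laplace measure on `ℝ^m` with scale `b`: `m` i.i.d. Laplace(`b`) coordinates. -/
noncomputable def lapPi (m : ℕ) (b : ℝ) : Measure (Fin m → ℝ) :=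
  MeasureTheory.volume.withDensity
    (fun x => ENNReal.ofReal (∏ k, (1 / (2 * b)) * Real.exp (-|x k| / b)))

/-- Convolution of two measures on `ℝ^m`: the law of `X + Z` with `X ∼ μ`, `Z ∼ ν` independent. -/
noncomputable def mconv {m : ℕ} (μ ν : Measure (Fin m → ℝ)) : Measure (Fin m → ℝ) :=
  (μ.prod ν).map (fun p => p.1 + p.2)

/-- The `L¹` norm on `ℝ^m`. -/
def l1norm {m : ℕ} (x : Fin m → ℝ) : ℝ := ∑ k, |x k|

/-- `γ` is a coupling of `μ` and `ν`. -/
def IsCoupling {m : ℕ} (γ : Measure ((Fin m → ℝ) × (Fin m → ℝ)))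
    (μ ν : Measure (Fin m → ℝ)) : Prop :=
  γ.map Prod.fst = μ ∧ γ.map Prod.snd = ν

noncomputable def lapPdf (m : ℕ) (b : ℝ) (x : Fin m → ℝ) : ℝ :=
  ∏ k, (1 / (2 * b)) * Real.exp (-|x k| / b)

section AddCommGroup

variable {G : Type*} [AddCommGroup G] [MeasurableSpace G]

lemma withDensity_preimage_add_left [MeasurableAdd G] [MeasurableSub G] (ρ : Measure G)
    [ρ.IsAddLeftInvariant] {f : G → ENNReal} (hf : Measurable f) (x : G) {S : Set G}
    (hS : MeasurableSet S) :
    ρ.withDensity f ((x + ·) ⁻¹' S) = ∫⁻ u in S, f (u - x) ∂ρ := by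
  rw [withDensity_apply _ (hS.preimage (measurable_const_add x)),
    ← (measurePreserving_add_left ρ x).setLIntegral_comp_preimage hS
      (f := fun u => f (u - x)) (hf.comp (measurable_sub_const x))]
  simp only [add_sub_cancel_left]

lemma measurable_setLIntegral_sub [MeasurableSub₂ G] (ρ : Measure G) [SFinite ρ]
    {f : G → ENNReal} (hf : Measurable f) (S : Set G) :
    Measurable fun x => ∫⁻ u in S, f (u - x) ∂ρ :=
  (hf.comp (measurable_snd.sub measurable_fst)).lintegral_prod_right'

end AddCommGroup

section

variable {m : ℕ}

lemma lapPi_eq_withDensity (m : ℕ) (b : ℝ) :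
    lapPi m b = volume.withDensity (fun x => ENNReal.ofReal (lapPdf m b x)) := rfl

lemma measurable_lapPdf (m : ℕ) (b : ℝ) : Measurable (lapPdf m b) := by
  unfold lapPdf
  fun_prop

lemma lapPdf_nonneg {b : ℝ} (hb : 0 ≤ b) (x : Fin m → ℝ) : 0 ≤ lapPdf m b x := by
  unfold lapPdf
  positivity

lemma lapPdf_sub_le {b : ℝ} (hb : 0 < b) (x y u : Fin m → ℝ) :
    lapPdf m b (u - x) ≤ Real.exp (l1norm (x - y) / b) * lapPdf m b (u - y) := by
  rw [l1norm, Finset.sum_div, Real.exp_sum, lapPdf, lapPdf, ← Finset.prod_mul_distrib]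
  refine Finset.prod_le_prod (fun k _ => by positivity) fun k _ => ?_
  rw [mul_left_comm, ← Real.exp_add, ← add_div]
  gcongr
  simp only [Pi.sub_apply]
  linarith [abs_sub_le (u k) (x k) (y k)]

lemma mconv_apply (μ ν : Measure (Fin m → ℝ)) [SFinite ν] {S : Set (Fin m → ℝ)}
    (hS : MeasurableSet S) : mconv μ ν S = ∫⁻ x, ν ((x + ·) ⁻¹' S) ∂μ := by
  have hadd : Measurable fun p : (Fin m → ℝ) × (Fin m → ℝ) => p.1 + p.2 := by fun_prop
  rw [mconv, Measure.map_apply hadd hS, Measure.prod_apply (hS.preimage hadd)]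
  rfl

lemma mconv_withDensity_apply (μ ρ : Measure (Fin m → ℝ)) [SFinite ρ]
    [ρ.IsAddLeftInvariant] {f : (Fin m → ℝ) → ENNReal} (hf : Measurable f)
    {S : Set (Fin m → ℝ)} (hS : MeasurableSet S) :
    mconv μ (ρ.withDensity f) S = ∫⁻ x, (∫⁻ u in S, f (u - x) ∂ρ) ∂μ := by
  rw [mconv_apply _ _ hS]
  exact lintegral_congr fun x => withDensity_preimage_add_left ρ hf x hS

lemma lintegral_le_of_isCoupling {γ : Measure ((Fin m → ℝ) × (Fin m → ℝ))}
    {μ ν : Measure (Fin m → ℝ)} (hγ : IsCoupling γ μ ν) {g h : (Fin m → ℝ) → ENNReal}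
    (hg : Measurable g) (hh : Measurable h) (hgh : ∀ᵐ p ∂γ, g p.1 ≤ h p.2) :
    ∫⁻ x, g x ∂μ ≤ ∫⁻ y, h y ∂ν := by
  rw [← hγ.1, ← hγ.2, lintegral_map hg measurable_fst, lintegral_map hh measurable_snd]
  exact lintegral_mono_ae hgh

lemma mconv_withDensity_le_of_isCoupling {γ : Measure ((Fin m → ℝ) × (Fin m → ℝ))}
    {μ ν : Measure (Fin m → ℝ)} (hγ : IsCoupling γ μ ν) (ρ : Measure (Fin m → ℝ)) [SFinite ρ]
    [ρ.IsAddLeftInvariant] {f : (Fin m → ℝ) → ENNReal} (hf : Measurable f) {c : ENNReal}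
    (hshift : ∀ᵐ p ∂γ, ∀ u, f (u - p.1) ≤ c * f (u - p.2))
    {S : Set (Fin m → ℝ)} (hS : MeasurableSet S) :
    mconv μ (ρ.withDensity f) S ≤ c * mconv ν (ρ.withDensity f) S := by
  have hg := measurable_setLIntegral_sub ρ hf S
  rw [mconv_withDensity_apply _ ρ hf hS, mconv_withDensity_apply _ ρ hf hS]
  refine (lintegral_le_of_isCoupling hγ hg (hg.const_mul c) (hshift.mono fun p hp => ?_)).trans_eq
    (lintegral_const_mul c hg)
  exact (lintegral_mono fun u => hp u).trans_eq
    (lintegral_const_mul c (hf.comp (measurable_sub_const _)))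

end

theorem laplace_noise_maxdiv_of_wasserstein_general
    (m : ℕ)
    (μ ν : Measure (Fin m → ℝ))
    (ε W : ℝ) (hε : 0 < ε) (hW : 0 < W)
    (hwass : ∃ γ : Measure ((Fin m → ℝ) × (Fin m → ℝ)),
      IsCoupling γ μ ν ∧ ∀ᵐ xy ∂γ, l1norm (xy.1 - xy.2) ≤ W) :
    ∀ S : Set (Fin m → ℝ), MeasurableSet S →
      mconv μ (lapPi m (W / ε)) S
        ≤ ENNReal.ofReal (Real.exp ε) * mconv ν (lapPi m (W / ε)) S := by
  intro S hS
  obtain ⟨γ, hγ, hclose⟩ := hwass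
  have hb : 0 < W / ε := div_pos hW hε
  rw [lapPi_eq_withDensity]
  refine mconv_withDensity_le_of_isCoupling hγ volume (measurable_lapPdf m _).ennreal_ofReal
    (hclose.mono fun p hp u => ?_) hS
  have hexp : l1norm (p.1 - p.2) / (W / ε) ≤ ε := by
    rwa [div_le_iff₀ hb, mul_div_cancel₀ _ hε.ne']
  rw [← ENNReal.ofReal_mul (Real.exp_pos ε).le]
  refine ENNReal.ofReal_le_ofReal ((lapPdf_sub_le hb p.1 p.2 u).trans ?_)
  gcongr
  exact lapPdf_nonneg hb.le _

/-- **Lemma A.5** (Laplace noise bounds max-divergence via `∞`-Wasserstein distance):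
if `μ` and `ν` admit a coupling `γ` with `‖x − y‖₁ ≤ W` `γ`-a.e., then
`D_∞(μ ∗ Lapₘ(W/ε) ‖ ν ∗ Lapₘ(W/ε)) ≤ ε`. -/
theorem laplace_noise_maxdiv_of_wasserstein
    (m : ℕ) (hm : 1 ≤ m)
    (μ ν : Measure (Fin m → ℝ))
    (hμ : IsProbabilityMeasure μ) (hν : IsProbabilityMeasure ν)
    (ε W : ℝ) (hε : 0 < ε) (hW : 0 < W)
    (hwass : ∃ γ : Measure ((Fin m → ℝ) × (Fin m → ℝ)),
      IsCoupling γ μ ν ∧ ∀ᵐ xy ∂γ, l1norm (xy.1 - xy.2) ≤ W) :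
    ∀ S : Set (Fin m → ℝ), MeasurableSet S →
      mconv μ (lapPi m (W / ε)) S
        ≤ ENNReal.ofReal (Real.exp ε) * mconv ν (lapPi m (W / ε)) S :=
  laplace_noise_maxdiv_of_wasserstein_general m μ ν ε W hε hW hwass
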